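/- arXiv:0803.0592 — 2 statements merged into one kernel-verified Lean document; each statement's English description precedes it below -/
import Mathlib

section
/- Let ω be a real number and let q, p, A₊, A₋ : ℝ → ℝ be differentiable functions such that for all t: A₊(t)² − A₋(t)² = 2p(t), A₊(t)·A₋(t) = ω·q(t), and H(t) := (1/2)(p(t)² + ω²q(t)²) > 0. Define D₊ = (A₊/2)(A₊² − 3A₋²) and D₋ = (A₋/2)(3A₊² − A₋²). If D₊′(t) = −(3ω/2)·D₋(t) and D₋′(t) = (3ω/2)·D₊(t) hold for all t, then A₊′(t) = −(ω/2)·A₋(t) and A₋′(t) = (ω/2)·A₊(t) for all t. -/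
theorem G_three_omega_half_implies_G_omega_half
    (ω : ℝ) (q p Ap Am : ℝ → ℝ)
    (hq : Differentiable ℝ q) (hp : Differentiable ℝ p)
    (hAp : Differentiable ℝ Ap) (hAm : Differentiable ℝ Am)
    (h2 : ∀ t, Ap t ^ 2 - Am t ^ 2 = 2 * p t)
    (h3 : ∀ t, Ap t * Am t = ω * q t)
    (hHpos : ∀ t, 0 < (1/2) * (p t ^ 2 + ω^2 * q t ^ 2))
    (Dp Dm : ℝ → ℝ)
    (hDp : ∀ t, Dp t = (Ap t / 2) * (Ap t ^ 2 - 3 * Am t ^ 2))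
    (hDm : ∀ t, Dm t = (Am t / 2) * (3 * Ap t ^ 2 - Am t ^ 2))
    (hG3 : ∀ t, deriv Dp t = -(3*ω/2) * Dm t ∧ deriv Dm t = (3*ω/2) * Dp t) :
    ∀ t, deriv Ap t = -(ω/2) * Am t ∧ deriv Am t = (ω/2) * Ap t := by
  intro t
  set x := Ap t with hx
  set y := Am t with hy
  set u := deriv Ap t with hu
  set v := deriv Am t with hv
  have hxp : HasDerivAt Ap u t := (hAp t).hasDerivAt
  have hym : HasDerivAt Am v t := (hAm t).hasDerivAt
  -- rewrite Dp, Dm as explicit functions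
  have hDpf : Dp = fun s => (Ap s ^ 3 - 3 * (Ap s * Am s ^ 2)) / 2 := by
    funext s; rw [hDp s]; ring
  have hDmf : Dm = fun s => (3 * (Am s * Ap s ^ 2) - Am s ^ 3) / 2 := by
    funext s; rw [hDm s]; ring
  have hdp : HasDerivAt Dp ((3 * x ^ 2 * u - 3 * (u * y ^ 2 + x * (2 * y * v))) / 2) t := by
    rw [hDpf]
    have := ((hxp.fun_pow 3).fun_sub ((hxp.fun_mul (hym.fun_pow 2)).const_mul 3)).div_const 2
    refine this.congr_deriv ?_
    push_cast
    ring
  have hdm : HasDerivAt Dm ((3 * (v * x ^ 2 + y * (2 * x * u)) - 3 * y ^ 2 * v) / 2) t := by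
    rw [hDmf]
    have := (((hym.fun_mul (hxp.fun_pow 2)).const_mul 3).fun_sub (hym.fun_pow 3)).div_const 2
    refine this.congr_deriv ?_
    push_cast
    ring
  have e1 : (3 * x ^ 2 * u - 3 * (u * y ^ 2 + x * (2 * y * v))) / 2
      = -(3*ω/2) * ((y / 2) * (3 * x ^ 2 - y ^ 2)) := by
    rw [← hdp.deriv]; rw [(hG3 t).1, hDm t]
  have e2 : (3 * (v * x ^ 2 + y * (2 * x * u)) - 3 * y ^ 2 * v) / 2
      = (3*ω/2) * ((x / 2) * (x ^ 2 - 3 * y ^ 2)) := by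
    rw [← hdm.deriv]; rw [(hG3 t).2, hDp t]
  -- positivity of the determinant
  have hdet : (x ^ 2 + y ^ 2) ^ 2 ≠ 0 := by
    have hH := hHpos t
    have h2t : x ^ 2 - y ^ 2 = 2 * p t := h2 t
    have h3t : x * y = ω * q t := h3 t
    have hid : (x ^ 2 + y ^ 2) ^ 2 = 4 * p t ^ 2 + 4 * (ω * q t) ^ 2 := by
      linear_combination (x^2 - y^2 + 2 * p t) * h2t + 4 * (x * y + ω * q t) * h3t
    nlinarith [hH, hid]
  constructor
  · have key : (x ^ 2 + y ^ 2) ^ 2 * u = (x ^ 2 + y ^ 2) ^ 2 * (-(ω/2) * y) := by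
      linear_combination (2/3) * (x^2 - y^2) * e1 + (2/3) * (2*x*y) * e2
    exact mul_left_cancel₀ hdet key
  · have key : (x ^ 2 + y ^ 2) ^ 2 * v = (x ^ 2 + y ^ 2) ^ 2 * ((ω/2) * x) := by
      linear_combination (2/3) * (x^2 - y^2) * e2 - (2/3) * (2*x*y) * e1
    exact mul_left_cancel₀ hdet key
end

section
/- Let ω be a nonzero real number and let q, p, A₊, A₋ : ℝ → ℝ be differentiable functions such that for all t: A₊(t)² + A₋(t)² = 2√(2H(t)), A₊(t)² − A₋(t)² = 2p(t), A₊(t)·A₋(t) = ω·q(t), where H(t) = (1/2)(p(t)² + ω²q(t)²); assume moreover H(t) > 0, A₊(t) ≠ 0 and A₋(t) ≠ 0 for all t. Set D₊ = (A₊/2)(A₊² − 3A₋²) and D₋ = (A₋/2)(3A₊² − A₋²). Then the Hamiltonian equations q′(t) = p(t) and p′(t) = −ω²·q(t) hold for all t if and only if for every choice of real numbers C₁, …, C₈, the eight functions μ¹₁₁ = C₅A₋ + C₆A₊ + C₇D₋ + C₈D₊; μ¹₁₂ = C₁A₊ + C₂A₋ − C₇D₊ + C₈D₋; μ¹₂₁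 = −C₁A₊ − C₂A₋ − C₃A₊ − C₄A₋ − C₅A₊ + C₆A₋ − C₇D₊ + C₈D₋; μ¹₂₂ = −C₃A₋ + C₄A₊ − C₇D₋ − C₈D₊; μ²₁₁ = C₃A₊ + C₄A₋ − C₇D₊ + C₈D₋; μ²₁₂ = C₁A₋ − C₂A₊ + C₃A₋ − C₄A₊ + C₅A₋ + C₆A₊ − C₇D₋ − C₈D₊; μ²₂₁ = −C₁A₋ + C₂A₊ − C₇D₋ − C₈D₊; μ²₂₂ = −C₅A₊ + C₆A₋ + C₇D₊ − C₈D₋ satisfy for all t the eight equations (μ¹₁₁)′ = −(ω/2)(μ²₁₁ + μ¹₁₂ + μ¹₂₁); (μ²₁₁)′ = (ω/2)(μ¹₁₁ − μ²₁₂ − μ²₂₁); (μ¹₁₂)′ = −(ω/2)(μ²₁₂ − μ¹₁₁ + μ¹₂₂); (μ²₁₂)′ = (ω/2)(μ¹₁₂ + μ²₁₁ − μ²₂₂); (μ¹₂₁)′ = −(ω/2)(μ²₂₁ − μ¹₁₁ + μ¹₂₂); (μ²₂₁)′ = (ω/2)(μ¹₂₁ + μ²₁₁ − μ²₂₂); (μ¹₂₂)′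 = −(ω/2)(μ²₂₂ − μ¹₁₂ − μ¹₂₁); (μ²₂₂)′ = (ω/2)(μ¹₂₂ + μ²₁₂ + μ²₂₁). -/
theorem hamiltonian_iff_operadic_lax_equations
    (ω : ℝ) (hω : ω ≠ 0) (q p Ap Am : ℝ → ℝ)
    (hq : Differentiable ℝ q) (hp : Differentiable ℝ p)
    (hAp : Differentiable ℝ Ap) (hAm : Differentiable ℝ Am)
    (H : ℝ → ℝ) (hH : ∀ t, H t = (1/2) * (p t ^ 2 + ω^2 * q t ^ 2))
    (h1 : ∀ t, Ap t ^ 2 + Am t ^ 2 = 2 * Real.sqrt (2 * H t))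
    (h2 : ∀ t, Ap t ^ 2 - Am t ^ 2 = 2 * p t)
    (h3 : ∀ t, Ap t * Am t = ω * q t)
    (hHpos : ∀ t, 0 < H t)
    (hApne : ∀ t, Ap t ≠ 0) (hAmne : ∀ t, Am t ≠ 0)
    (Dp Dm : ℝ → ℝ)
    (hDp : ∀ t, Dp t = (Ap t / 2) * (Ap t ^ 2 - 3 * Am t ^ 2))
    (hDm : ∀ t, Dm t = (Am t / 2) * (3 * Ap t ^ 2 - Am t ^ 2)) :
    (∀ t, deriv q t = p t ∧ deriv p t = -ω^2 * q t)
    ↔ (∀ C1 C2 C3 C4 C5 C6 C7 C8 : ℝ, ∀ t : ℝ,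
      deriv (fun s => C5 * Am s + C6 * Ap s + C7 * Dm s + C8 * Dp s) t = -(ω/2) * ((C3 * Ap t + C4 * Am t - C7 * Dp t + C8 * Dm t) + (C1 * Ap t + C2 * Am t - C7 * Dp t + C8 * Dm t) + (-C1 * Ap t - C2 * Am t - C3 * Ap t - C4 * Am t - C5 * Ap t + C6 * Am t - C7 * Dp t + C8 * Dm t))
      ∧ deriv (fun s => C3 * Ap s + C4 * Am s - C7 * Dp s + C8 * Dm s) t = (ω/2) * ((C5 * Am t + C6 * Ap t + C7 * Dm t + C8 * Dp t) - (C1 * Am t - C2 * Ap t + C3 * Am t - C4 * Ap t + C5 * Am t + C6 * Ap t - C7 * Dm t - C8 * Dp t) - (-C1 * Am t + C2 * Ap t - C7 * Dm t - C8 * Dp t))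
      ∧ deriv (fun s => C1 * Ap s + C2 * Am s - C7 * Dp s + C8 * Dm s) t = -(ω/2) * ((C1 * Am t - C2 * Ap t + C3 * Am t - C4 * Ap t + C5 * Am t + C6 * Ap t - C7 * Dm t - C8 * Dp t) - (C5 * Am t + C6 * Ap t + C7 * Dm t + C8 * Dp t) + (-C3 * Am t + C4 * Ap t - C7 * Dm t - C8 * Dp t))
      ∧ deriv (fun s => C1 * Am s - C2 * Ap s + C3 * Am s - C4 * Ap s + C5 * Am s + C6 * Ap s - C7 * Dm s - C8 * Dp s) t = (ω/2) * ((C1 * Ap t + C2 * Am t - C7 * Dp t + C8 * Dm t) + (C3 * Ap t + C4 * Am t - C7 * Dp t + C8 * Dm t) - (-C5 * Ap t + C6 * Am t + C7 * Dp t - C8 * Dm t))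
      ∧ deriv (fun s => -C1 * Ap s - C2 * Am s - C3 * Ap s - C4 * Am s - C5 * Ap s + C6 * Am s - C7 * Dp s + C8 * Dm s) t = -(ω/2) * ((-C1 * Am t + C2 * Ap t - C7 * Dm t - C8 * Dp t) - (C5 * Am t + C6 * Ap t + C7 * Dm t + C8 * Dp t) + (-C3 * Am t + C4 * Ap t - C7 * Dm t - C8 * Dp t))
      ∧ deriv (fun s => -C1 * Am s + C2 * Ap s - C7 * Dm s - C8 * Dp s) t = (ω/2) * ((-C1 * Ap t - C2 * Am t - C3 * Ap t - C4 * Am t - C5 * Ap t + C6 * Am t - C7 * Dp t + C8 * Dm t) + (C3 * Ap t + C4 * Am t - C7 * Dp t + C8 * Dm t) - (-C5 * Ap t + C6 * Am t + C7 * Dp t - C8 * Dm t))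
      ∧ deriv (fun s => -C3 * Am s + C4 * Ap s - C7 * Dm s - C8 * Dp s) t = -(ω/2) * ((-C5 * Ap t + C6 * Am t + C7 * Dp t - C8 * Dm t) - (C1 * Ap t + C2 * Am t - C7 * Dp t + C8 * Dm t) - (-C1 * Ap t - C2 * Am t - C3 * Ap t - C4 * Am t - C5 * Ap t + C6 * Am t - C7 * Dp t + C8 * Dm t))
      ∧ deriv (fun s => -C5 * Ap s + C6 * Am s + C7 * Dp s - C8 * Dm s) t = (ω/2) * ((-C3 * Am t + C4 * Ap t - C7 * Dm t - C8 * Dp t) + (C1 * Am t - C2 * Ap t + C3 * Am t - C4 * Ap t + C5 * Am t + C6 * Ap t - C7 * Dm t - C8 * Dp t) + (-C1 * Am t + C2 * Ap t - C7 * Dm t - C8 * Dp t))) := by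
  
  have hApAt : ∀ t, HasDerivAt Ap (deriv Ap t) t := fun t => (hAp t).hasDerivAt
  have hAmAt : ∀ t, HasDerivAt Am (deriv Am t) t := fun t => (hAm t).hasDerivAt
  -- derivative relation from constraint h2
  have hrel2 : ∀ t, Ap t * deriv Ap t - Am t * deriv Am t = deriv p t := by
    intro t
    have hfa : HasDerivAt (fun s => Ap s ^ 2 - Am s ^ 2)
        ((2:ℕ) * Ap t ^ (2-1) * deriv Ap t - (2:ℕ) * Am t ^ (2-1) * deriv Am t) t :=
      ((hApAt t).pow 2).sub ((hAmAt t).pow 2)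
    have hfb : HasDerivAt (fun s => Ap s ^ 2 - Am s ^ 2) (2 * deriv p t) t := by
      have e : (fun s => Ap s ^ 2 - Am s ^ 2) = fun s => 2 * p s := funext h2
      rw [e]
      exact ((hp t).hasDerivAt).const_mul 2
    have huniq := hfa.unique hfb
    norm_num at huniq
    linarith
  -- derivative relation from constraint h3
  have hrel3 : ∀ t, deriv Ap t * Am t + Ap t * deriv Am t = ω * deriv q t := by
    intro t
    have hfa : HasDerivAt (fun s => Ap s * Am s)
        (deriv Ap t * Am t + Ap t * deriv Am t) t := (hApAt t).mul (hAmAt t)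
    have hfb : HasDerivAt (fun s => Ap s * Am s) (ω * deriv q t) t := by
      have e : (fun s => Ap s * Am s) = fun s => ω * q s := funext h3
      rw [e]
      exact ((hq t).hasDerivAt).const_mul ω
    exact hfa.unique hfb
  have hDpfun : Dp = fun s => (Ap s / 2) * (Ap s ^ 2 - 3 * Am s ^ 2) := funext hDp
  have hDmfun : Dm = fun s => (Am s / 2) * (3 * Ap s ^ 2 - Am s ^ 2) := funext hDm
  have hDpdiff : Differentiable ℝ Dp := by
    rw [hDpfun]
    exact (hAp.div_const 2).mul ((hAp.pow 2).sub ((hAm.pow 2).const_mul 3))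
  have hDmdiff : Differentiable ℝ Dm := by
    rw [hDmfun]
    exact (hAm.div_const 2).mul (((hAp.pow 2).const_mul 3).sub (hAm.pow 2))
  have hDpAt : ∀ t, HasDerivAt Dp (deriv Dp t) t := fun t => (hDpdiff t).hasDerivAt
  have hDmAt : ∀ t, HasDerivAt Dm (deriv Dm t) t := fun t => (hDmdiff t).hasDerivAt
  constructor
  · intro ham
    -- derive the A derivatives
    have hAp' : ∀ t, deriv Ap t = -(ω/2) * Am t := by
      intro t
      have e1 := hrel2 t
      rw [(ham t).2] at e1
      have e2 := hrel3 t
      rw [(ham t).1] at e2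
      have habne : Ap t ^ 2 + Am t ^ 2 ≠ 0 := by
        have := hApne t
        positivity
      have key : (Ap t ^ 2 + Am t ^ 2) * (deriv Ap t + (ω/2) * Am t) = 0 := by
        linear_combination Ap t * e1 + Am t * e2 + (Ap t * ω) * h3 t - (Am t * ω / 2) * h2 t
      have := (mul_eq_zero.1 key).resolve_left habne
      linarith
    have hAm' : ∀ t, deriv Am t = (ω/2) * Ap t := by
      intro t
      have e1 := hrel2 t
      rw [(ham t).2] at e1
      have e2 := hrel3 t
      rw [(ham t).1] at e2
      have habne : Ap t ^ 2 + Am t ^ 2 ≠ 0 := by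
        have := hApne t
        positivity
      have key : (Ap t ^ 2 + Am t ^ 2) * (deriv Am t - (ω/2) * Ap t) = 0 := by
        linear_combination (-(Am t)) * e1 + Ap t * e2 - (Am t * ω) * h3 t - (Ap t * ω / 2) * h2 t
      have := (mul_eq_zero.1 key).resolve_left habne
      linarith
    have hDp' : ∀ t, deriv Dp t = -(3*ω/2) * Dm t := by
      intro t
      have hd : HasDerivAt Dp
          ((deriv Ap t / 2) * (Ap t ^ 2 - 3 * Am t ^ 2)
            + (Ap t / 2) * ((2:ℕ) * Ap t ^ (2-1) * deriv Ap t - 3 * ((2:ℕ) * Am t ^ (2-1) * deriv Am t))) t := by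
        rw [hDpfun]
        exact ((hApAt t).div_const 2).mul (((hApAt t).pow 2).sub (((hAmAt t).pow 2).const_mul 3))
      rw [hd.deriv, hAp' t, hAm' t, hDm t]
      push_cast
      ring
    have hDm' : ∀ t, deriv Dm t = (3*ω/2) * Dp t := by
      intro t
      have hd : HasDerivAt Dm
          ((deriv Am t / 2) * (3 * Ap t ^ 2 - Am t ^ 2)
            + (Am t / 2) * (3 * ((2:ℕ) * Ap t ^ (2-1) * deriv Ap t) - (2:ℕ) * Am t ^ (2-1) * deriv Am t)) t := by
        rw [hDmfun]
        exact ((hAmAt t).div_const 2).mul ((((hApAt t).pow 2).const_mul 3).sub ((hAmAt t).pow 2))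
      rw [hd.deriv, hAp' t, hAm' t, hDp t]
      push_cast
      ring
    have hLC : ∀ (a b c d : ℝ) (t : ℝ),
        deriv (fun s => a * Ap s + b * Am s + c * Dp s + d * Dm s) t
          = a * (-(ω/2) * Am t) + b * ((ω/2) * Ap t) + c * (-(3*ω/2) * Dm t) + d * ((3*ω/2) * Dp t) := by
      intro a b c d t
      have h : HasDerivAt (fun s => a * Ap s + b * Am s + c * Dp s + d * Dm s)
          (a * deriv Ap t + b * deriv Am t + c * deriv Dp t + d * deriv Dm t) t := ((((hApAt t).const_mul a).add ((hAmAt t).const_mul b)).add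
        ((hDpAt t).const_mul c)).add ((hDmAt t).const_mul d)
      rw [h.deriv, hAp' t, hAm' t, hDp' t, hDm' t]
    intro C1 C2 C3 C4 C5 C6 C7 C8 t
    refine ⟨?_, ?_, ?_, ?_, ?_, ?_, ?_, ?_⟩
    · have e : (fun s => C5 * Am s + C6 * Ap s + C7 * Dm s + C8 * Dp s)
          = fun s => C6 * Ap s + C5 * Am s + C8 * Dp s + C7 * Dm s := by funext s; ring
      rw [e, hLC]
      simp only [hDp, hDm]; ring
    · have e : (fun s => C3 * Ap s + C4 * Am s - C7 * Dp s + C8 * Dm s)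
          = fun s => C3 * Ap s + C4 * Am s + (-C7) * Dp s + C8 * Dm s := by funext s; ring
      rw [e, hLC]
      simp only [hDp, hDm]; ring
    · have e : (fun s => C1 * Ap s + C2 * Am s - C7 * Dp s + C8 * Dm s)
          = fun s => C1 * Ap s + C2 * Am s + (-C7) * Dp s + C8 * Dm s := by funext s; ring
      rw [e, hLC]
      simp only [hDp, hDm]; ring
    · have e : (fun s => C1 * Am s - C2 * Ap s + C3 * Am s - C4 * Ap s + C5 * Am s + C6 * Ap s - C7 * Dm s - C8 * Dp s)
          = fun s => (-C2 - C4 + C6) * Ap s + (C1 + C3 + C5) * Am s + (-C8) * Dp s + (-C7) * Dm s := by funext s; ring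
      rw [e, hLC]
      simp only [hDp, hDm]; ring
    · have e : (fun s => -C1 * Ap s - C2 * Am s - C3 * Ap s - C4 * Am s - C5 * Ap s + C6 * Am s - C7 * Dp s + C8 * Dm s)
          = fun s => (-C1 - C3 - C5) * Ap s + (-C2 - C4 + C6) * Am s + (-C7) * Dp s + C8 * Dm s := by funext s; ring
      rw [e, hLC]
      simp only [hDp, hDm]; ring
    · have e : (fun s => -C1 * Am s + C2 * Ap s - C7 * Dm s - C8 * Dp s)
          = fun s => C2 * Ap s + (-C1) * Am s + (-C8) * Dp s + (-C7) * Dm s := by funext s; ring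
      rw [e, hLC]
      simp only [hDp, hDm]; ring
    · have e : (fun s => -C3 * Am s + C4 * Ap s - C7 * Dm s - C8 * Dp s)
          = fun s => C4 * Ap s + (-C3) * Am s + (-C8) * Dp s + (-C7) * Dm s := by funext s; ring
      rw [e, hLC]
      simp only [hDp, hDm]; ring
    · have e : (fun s => -C5 * Ap s + C6 * Am s + C7 * Dp s - C8 * Dm s)
          = fun s => (-C5) * Ap s + C6 * Am s + C7 * Dp s + (-C8) * Dm s := by funext s; ring
      rw [e, hLC]
      simp only [hDp, hDm]; ring
  · intro hlax t
    have hAp' : deriv Ap t = -(ω/2) * Am t := by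
      obtain ⟨-, -, h3rd, -⟩ := hlax 1 0 0 0 0 0 0 0 t
      have e : (fun s => (1:ℝ) * Ap s + 0 * Am s - 0 * Dp s + 0 * Dm s) = Ap := by
        funext s; ring
      rw [e] at h3rd
      rw [h3rd]; ring
    have hAm' : deriv Am t = (ω/2) * Ap t := by
      obtain ⟨-, -, h3rd, -⟩ := hlax 0 1 0 0 0 0 0 0 t
      have e : (fun s => (0:ℝ) * Ap s + 1 * Am s - 0 * Dp s + 0 * Dm s) = Am := by
        funext s; ring
      rw [e] at h3rd
      rw [h3rd]; ring
    constructor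
    · have e2 := hrel3 t
      rw [hAp', hAm'] at e2
      have : ω * deriv q t = ω * p t := by
        linear_combination -e2 + (ω/2) * h2 t
      exact mul_left_cancel₀ hω this
    · have e1 := hrel2 t
      rw [hAp', hAm'] at e1
      linear_combination -e1 - ω * h3 t
end
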